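/- For j = 1, 2, ..., k, let A_j be an n_j×n_j real symmetric matrix with eigenvalues λ_{1j}, λ_{2j}, ..., λ_{n_j j} counted with multiplicity, and suppose for each j the vector u_j is a unit eigenvector of A_j corresponding to λ_{1j}. Then for any real constants ρ_{pq} (1 ≤ p, q ≤ k) satisfying ρ_{qp} = ρ_{pq}, the symmetric block matrix B whose (p,p) diagonal block is A_p + ρ_{pp} u_p u_pᵀ and whose (p,q) off-diagonal block (p ≠ q) is ρ_{pq} u_p u_qᵀ has eigenvalues λ_{21}, ..., λ_{n₁1}, λ_{22}, ..., λ_{n₂2}, ..., λ_{2k}, ..., λ_{n_k k}, γ₁, ..., γ_k (counted with multiplicity), where γ₁, ..., γ_k are the eigenvalues of the k×k symmetric matrix B̂ whose (p,p) entry is λ_{1p} + ρ_{pp} and whose (p,q) entry (p ≠ q) is ρ_{pq}. -/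

import Mathlib

/-!
Choose orthogonal `Q_j` with first column `u_j` and conjugate `B` by `P = diag(Q_j)`. Since
`Q_jᵀ u_j = e₀`, this gives `diag(Q_jᵀ A_j Q_j) + E ρ Eᵀ`, where `E` picks the first coordinate of
each block. The vector `e₀` is an eigenvector of `Q_jᵀ A_j Q_j` for `λ_{1j}`, so after moving the
first coordinates of all blocks to the front the matrix is block upper triangular, with diagonal
blocks `B̂` and a matrix `L` that does not involve `ρ`. Hence `χ_B = χ_{B̂} χ_L`. For `ρ = 0` the
same computation gives `∏ χ_{A_j} = ∏ (X - λ_{1j}) χ_L`, so the roots of `χ_L` are the `μ`s.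
-/

open Matrix Polynomial

namespace Matrix

theorem charpoly_transpose_mul_mul {R m : Type*} [CommRing R] [Fintype m] [DecidableEq m]
    (Q N : Matrix m m R) (hQ : Qᵀ * Q = 1) : (Qᵀ * N * Q).charpoly = N.charpoly := by
  rw [charpoly_mul_comm, ← Matrix.mul_assoc, mul_eq_one_comm.mp hQ, Matrix.one_mul]

theorem charpoly_eq_mul_of_sumEquiv {R l m n : Type*} [CommRing R] [Fintype l] [DecidableEq l]
    [Fintype m] [DecidableEq m] [Fintype n] [DecidableEq n]
    (e : m ⊕ n ≃ l) (N : Matrix l l R) (h : ∀ i j, N (e (.inr i)) (e (.inl j)) = 0) :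
    N.charpoly = (N.submatrix (e ∘ .inl) (e ∘ .inl)).charpoly
      * (N.submatrix (e ∘ .inr) (e ∘ .inr)).charpoly := by
  have h₂₁ : (N.submatrix e e).toBlocks₂₁ = 0 := by ext i j; exact h i j
  rw [← charpoly_reindex e.symm N, reindex_apply, Equiv.symm_symm,
    ← fromBlocks_toBlocks (N.submatrix e e), h₂₁, charpoly_fromBlocks_zero₂₁]
  rfl

theorem det_blockDiagonal' {R ι : Type*} [CommRing R] [Fintype ι] [DecidableEq ι]
    {m : ι → Type*} [∀ j, Fintype (m j)] [∀ j, DecidableEq (m j)]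
    (M : ∀ j, Matrix (m j) (m j) R) : (blockDiagonal' M).det = ∏ j, (M j).det := by
  let : LinearOrder ι := LinearOrder.lift' _ (Fintype.equivFin ι).injective
  rw [(blockTriangular_blockDiagonal' M).det_fintype]
  refine Finset.prod_congr rfl fun j _ => ?_
  rw [← det_submatrix_equiv_self (Equiv.sigmaSubtype j).symm]
  congr 1
  ext a b
  exact blockDiagonal'_apply_eq M j a b

theorem charmatrix_blockDiagonal' {R ι : Type*} [CommRing R] [Fintype ι] [DecidableEq ι]
    {m : ι → Type*} [∀ j, Fintype (m j)] [∀ j, DecidableEq (m j)]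
    (M : ∀ j, Matrix (m j) (m j) R) :
    charmatrix (blockDiagonal' M) = blockDiagonal' fun j => charmatrix (M j) := by
  ext ⟨p, i⟩ ⟨q, i'⟩ : 1
  by_cases h : p = q
  · subst h
    by_cases hi : i = i' <;> simp [hi]
  · simp [blockDiagonal'_apply_ne _ _ _ h, h]

theorem charpoly_blockDiagonal' {R ι : Type*} [CommRing R] [Fintype ι] [DecidableEq ι]
    {m : ι → Type*} [∀ j, Fintype (m j)] [∀ j, DecidableEq (m j)]
    (M : ∀ j, Matrix (m j) (m j) R) : (blockDiagonal' M).charpoly = ∏ j, (M j).charpoly := by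
  rw [charpoly, charmatrix_blockDiagonal', det_blockDiagonal']
  rfl

theorem exists_transpose_mul_self_eq_one_mulVec_single {ι : Type*} [Fintype ι] [DecidableEq ι]
    (i₀ : ι) (u : ι → ℝ) (hu : ∑ i, u i ^ 2 = 1) :
    ∃ Q : Matrix ι ι ℝ, Qᵀ * Q = 1 ∧ Q *ᵥ Pi.single i₀ 1 = u := by
  have hunit : Orthonormal ℝ (({i₀} : Set ι).domRestrict fun _ => WithLp.toLp 2 u) := by
    rw [orthonormal_iff_ite]
    rintro ⟨i, rfl⟩ ⟨j, rfl⟩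
    simp only [Set.domRestrict_apply, PiLp.inner_apply, if_true]
    simpa [pow_two, mul_comm] using hu
  obtain ⟨b, hb⟩ := hunit.exists_orthonormalBasis_extension_of_card_eq (by simp)
  refine ⟨(EuclideanSpace.basisFun ι ℝ).toBasis.toMatrix b, ?_, ?_⟩
  · simpa using (EuclideanSpace.basisFun ι ℝ).toMatrix_orthonormalBasis_conjTranspose_mul_self b
  · ext i
    simp [Module.Basis.toMatrix_apply, hb i₀ rfl]

theorem transpose_mul_mul_mulVec_eq_smul {R m : Type*} [CommSemiring R] [Fintype m]
    [DecidableEq m] {Q A : Matrix m m R} {u v : m → R} {c : R} (hQ : Qᵀ * Q = 1)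
    (hv : Q *ᵥ v = u) (hu : A *ᵥ u = c • u) : (Qᵀ * A * Q) *ᵥ v = c • v := by
  rw [← mulVec_mulVec, ← mulVec_mulVec, hv, hu, mulVec_smul, ← hv, mulVec_mulVec, hQ,
    one_mulVec]

section BlockCol

variable {ι : Type*} [DecidableEq ι] {l m : ι → Type*} {α : Type*}

def blockCol [Zero α] (u : ∀ j, m j → α) : Matrix (Σ j, m j) ι α :=
  of fun x q => if x.1 = q then u x.1 x.2 else 0

@[simp]
theorem blockCol_apply [Zero α] (u : ∀ j, m j → α) (x : Σ j, m j) (q : ι) :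
    blockCol u x q = if x.1 = q then u x.1 x.2 else 0 :=
  rfl

theorem blockCol_mul_mul_transpose_apply [Fintype ι] [Semiring α] (u v : ∀ j, m j → α)
    (S : Matrix ι ι α) (x y : Σ j, m j) :
    (blockCol u * S * (blockCol v)ᵀ) x y = u x.1 x.2 * S x.1 y.1 * v y.1 y.2 := by
  simp [Matrix.mul_apply, ite_mul, mul_ite]

theorem blockDiagonal'_mul_blockCol [Fintype ι] [∀ j, Fintype (m j)]
    [NonUnitalNonAssocSemiring α] (Q : ∀ j, Matrix (l j) (m j) α) (u : ∀ j, m j → α) :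
    blockDiagonal' Q * blockCol u = blockCol fun j => Q j *ᵥ u j := by
  ext ⟨p, i⟩ q
  rw [Matrix.mul_apply, Fintype.sum_sigma, Finset.sum_eq_single p]
  · by_cases h : p = q
    · subst h; simp [mulVec, dotProduct]
    · simp [h]
  · intro p' _ hp'
    exact Finset.sum_eq_zero fun i' _ => by
      rw [blockDiagonal'_apply_ne _ _ _ (Ne.symm hp'), zero_mul]
  · simp

theorem blockDiagonal'_transpose_mul_add_blockCol_mul [Fintype ι] [∀ j, Fintype (m j)]
    [∀ j, DecidableEq (m j)] [CommSemiring α] (Q A : ∀ j, Matrix (m j) (m j) α)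
    (u : ∀ j, m j → α) (S : Matrix ι ι α) :
    (blockDiagonal' Q)ᵀ * (blockDiagonal' A + blockCol u * S * (blockCol u)ᵀ) * blockDiagonal' Q
      = blockDiagonal' (fun j => (Q j)ᵀ * A j * Q j)
        + blockCol (fun j => (Q j)ᵀ *ᵥ u j) * S * (blockCol fun j => (Q j)ᵀ *ᵥ u j)ᵀ := by
  have hU : (blockDiagonal' Q)ᵀ * blockCol u = blockCol fun j => (Q j)ᵀ *ᵥ u j := by
    rw [blockDiagonal'_transpose, blockDiagonal'_mul_blockCol]
  rw [← hU, blockDiagonal'_mul, blockDiagonal'_mul, ← blockDiagonal'_transpose]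
  simp only [Matrix.mul_add, Matrix.add_mul, transpose_mul, transpose_transpose, Matrix.mul_assoc]

end BlockCol

def sigmaFinSuccEquiv {ι : Type*} (n : ι → ℕ) : ι ⊕ (Σ j, Fin (n j)) ≃ Σ j, Fin (n j + 1) where
  toFun := Sum.elim (fun j => ⟨j, 0⟩) (fun x => ⟨x.1, x.2.succ⟩)
  invFun x := Fin.cases (.inl x.1) (fun i => .inr ⟨x.1, i⟩) x.2
  left_inv := by rintro (j | ⟨j, i⟩) <;> simp
  right_inv := by
    rintro ⟨j, i⟩
    induction i using Fin.cases <;> simp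

@[simp]
theorem sigmaFinSuccEquiv_inl {ι : Type*} (n : ι → ℕ) (j : ι) :
    sigmaFinSuccEquiv n (.inl j) = ⟨j, 0⟩ :=
  rfl

@[simp]
theorem sigmaFinSuccEquiv_inr {ι : Type*} (n : ι → ℕ) (x : Σ j, Fin (n j)) :
    sigmaFinSuccEquiv n (.inr x) = ⟨x.1, x.2.succ⟩ :=
  rfl

theorem charpoly_blockDiagonal'_add_blockCol_single {R ι : Type*} [CommRing R] [Fintype ι]
    [DecidableEq ι] {n : ι → ℕ} (M : ∀ j, Matrix (Fin (n j + 1)) (Fin (n j + 1)) R)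
    (lam : ι → R) (hM : ∀ j, M j *ᵥ Pi.single 0 1 = lam j • Pi.single 0 1)
    (S : Matrix ι ι R) :
    (blockDiagonal' M
        + blockCol (fun j => (Pi.single 0 1 : Fin (n j + 1) → R)) * S
          * (blockCol fun j => (Pi.single 0 1 : Fin (n j + 1) → R))ᵀ).charpoly
      = (diagonal lam + S).charpoly
        * ((blockDiagonal' M).submatrix (sigmaFinSuccEquiv n ∘ .inr)
            (sigmaFinSuccEquiv n ∘ .inr)).charpoly := by
  have hcol : ∀ j i, M j i 0 = lam j * (Pi.single 0 1 : Fin (n j + 1) → R) i := fun j i => by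
    simpa using congrFun (hM j) i
  rw [charpoly_eq_mul_of_sumEquiv (sigmaFinSuccEquiv n)]
  · congr 2
    · ext p q
      by_cases h : p = q
      · subst h; simp [blockCol_mul_mul_transpose_apply, hcol]
      · simp [blockCol_mul_mul_transpose_apply, blockDiagonal'_apply_ne _ _ _ h, h]
    · ext x y
      simp [blockCol_mul_mul_transpose_apply]
  · rintro ⟨p, i⟩ q
    by_cases h : p = q
    · subst h; simp [blockCol_mul_mul_transpose_apply, hcol, Fin.succ_ne_zero]
    · simp [blockCol_mul_mul_transpose_apply, blockDiagonal'_apply_ne _ _ _ h]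

theorem charpoly_blockDiagonal'_add_blockCol {R ι : Type*} [CommRing R] [Fintype ι]
    [DecidableEq ι] {n : ι → ℕ} {Q A : ∀ j, Matrix (Fin (n j + 1)) (Fin (n j + 1)) R}
    {u : ∀ j, Fin (n j + 1) → R} {lam : ι → R} (hQ : ∀ j, (Q j)ᵀ * Q j = 1)
    (hQu : ∀ j, Q j *ᵥ Pi.single 0 1 = u j) (hA : ∀ j, A j *ᵥ u j = lam j • u j)
    (S : Matrix ι ι R) :
    (blockDiagonal' A + blockCol u * S * (blockCol u)ᵀ).charpoly
      = (diagonal lam + S).charpoly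
        * ((blockDiagonal' fun j => (Q j)ᵀ * A j * Q j).submatrix (sigmaFinSuccEquiv n ∘ .inr)
            (sigmaFinSuccEquiv n ∘ .inr)).charpoly := by
  have hP : (blockDiagonal' Q)ᵀ * blockDiagonal' Q = 1 := by
    rw [blockDiagonal'_transpose, ← blockDiagonal'_mul]
    simp only [hQ]
    exact blockDiagonal'_one
  have hQu' : ∀ j, (Q j)ᵀ *ᵥ u j = Pi.single 0 1 := fun j => by
    rw [← hQu j, mulVec_mulVec, hQ j, one_mulVec]
  rw [← charpoly_transpose_mul_mul _ _ hP, blockDiagonal'_transpose_mul_add_blockCol_mul]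
  simp only [hQu']
  exact charpoly_blockDiagonal'_add_blockCol_single _ lam
    (fun j => transpose_mul_mul_mulVec_eq_smul (hQ j) (hQu j) (hA j)) S

end Matrix

theorem Polynomial.roots_eq_bind_of_prod_eq_mul {R ι : Type*} [CommRing R] [IsDomain R]
    [Fintype ι] {f : ι → R[X]} {a : ι → R} {s : ι → Multiset R} {g : R[X]}
    (hf : ∀ j, (f j).roots = a j ::ₘ s j) (hg : g ≠ 0)
    (h : ∏ j, f j = (∏ j, (X - C (a j))) * g) :
    g.roots = Finset.univ.val.bind s := by
  have hlin : ∏ j, (X - C (a j)) ≠ 0 :=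
    (monic_prod_of_monic _ _ fun j _ => monic_X_sub_C (a j)).ne_zero
  have hroots := congrArg roots h
  rw [roots_mul (mul_ne_zero hlin hg), roots_prod _ _ (h ▸ mul_ne_zero hlin hg),
    roots_prod _ _ hlin] at hroots
  simp only [hf, roots_X_sub_C, ← Multiset.singleton_add, Multiset.bind_add] at hroots
  exact (add_left_cancel hroots).symm

/-- Symmetric version of the main theorem: `A_j` symmetric, `ρ_{qp} = ρ_{pq}`. -/
theorem stmt_5 (k : ℕ) (n : Fin k → ℕ)
    (A : ∀ j, Matrix (Fin (n j + 1)) (Fin (n j + 1)) ℝ)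
    (lam1 : Fin k → ℝ)
    (μ : ∀ j, Fin (n j) → ℝ)
    (hspec : ∀ j, (A j).charpoly.roots = lam1 j ::ₘ Finset.univ.val.map (μ j))
    (u : ∀ j, Fin (n j + 1) → ℝ)
    (heig : ∀ j, (A j).mulVec (u j) = lam1 j • u j)
    (hnorm : ∀ j, ∑ i, u j i ^ 2 = 1)
    (ρ : Fin k → Fin k → ℝ)
    (B : Matrix ((j : Fin k) × Fin (n j + 1)) ((j : Fin k) × Fin (n j + 1)) ℝ)
    (hB : ∀ x y : (j : Fin k) × Fin (n j + 1), B x y =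
      (if h : x.1 = y.1 then A x.1 x.2 (Fin.cast (by rw [h]) y.2) else 0)
        + ρ x.1 y.1 * u x.1 x.2 * u y.1 y.2)
    (Bhat : Matrix (Fin k) (Fin k) ℝ)
    (hBhat : ∀ p q : Fin k, Bhat p q = (if p = q then lam1 p else 0) + ρ p q) :
    B.charpoly.roots
      = Bhat.charpoly.roots
        + Finset.univ.val.bind fun j : Fin k => Finset.univ.val.map (μ j) := by
  choose Q hQ hQu using fun j => exists_transpose_mul_self_eq_one_mulVec_single 0 (u j) (hnorm j)
  set L := (blockDiagonal' fun j => (Q j)ᵀ * A j * Q j).submatrix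
    (sigmaFinSuccEquiv n ∘ .inr) (sigmaFinSuccEquiv n ∘ .inr)
  have hχ := charpoly_blockDiagonal'_add_blockCol hQ hQu heig
  have hBdec : B = blockDiagonal' A + blockCol u * of ρ * (blockCol u)ᵀ := by
    ext ⟨p, i⟩ ⟨q, j⟩
    rw [Matrix.add_apply, hB, blockCol_mul_mul_transpose_apply, of_apply, mul_comm (u _ _)]
    by_cases h : p = q
    · subst h; simp
    · simp [h, blockDiagonal'_apply_ne _ _ _ h]
  have hχB : B.charpoly = Bhat.charpoly * L.charpoly := by
    rw [hBdec, hχ]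
    congr
    ext p q
    simp [hBhat, diagonal_apply]
  have hχA : ∏ j, (A j).charpoly = (∏ j, (X - C (lam1 j))) * L.charpoly := by
    simpa only [Matrix.mul_zero, Matrix.zero_mul, add_zero, charpoly_blockDiagonal',
      charpoly_diagonal] using hχ 0
  rw [hχB, roots_mul (mul_ne_zero Bhat.charpoly_monic.ne_zero L.charpoly_monic.ne_zero),
    roots_eq_bind_of_prod_eq_mul hspec L.charpoly_monic.ne_zero hχA]
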